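/- arXiv:0808.3646 — 2 statements merged into one kernel-verified Lean document; each statement's English description precedes it below -/
import Mathlib

section
/- Finite type invariants form a complete invariant for cyclic equivalence classes of signed words: if w₁ and w₂ are signed words such that v(w₁) = v(w₂) for every finite type invariant v (of every degree), then w₁ and w₂ are cyclically equivalent. -/
/-! For a signed word `u`, the number `Ncount u w` of letter sets of `w` whose induced subword is
cyclically equivalent to `u` is a cyclic equivalence invariant, because a cyclic equivalence
relabels the letters and carries induced subwords to equivalent induced subwords. It has degree
`≤ |u|`: in the inclusion–exclusion sum defining the prolongation over `S`, a copy `U` of `u`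
survives exactly the deletions `T ⊆ S \ U`, and the alternating sum over these vanishes once
`|S| > |u|`. Since `Ncount u u = 1`, agreement of all finite type invariants puts a copy of `w₁`
inside `w₂` and a copy of `w₂` inside `w₁`; so the two words have equally many letters, and
the copy of `w₁` in `w₂` is `w₂` itself. -/

/-- Letters are indexed by natural numbers; a signed letter carries a sign
(`true` = `+`, `false` = `−`). -/
abbrev Letter : Type := ℕ × Bool

/-- A signed word: every entry occurs exactly twice, and the two occurrences of
any letter carry the same sign. -/
def IsSignedWord (w : List Letter) : Prop :=
  ∀ p ∈ w, w.count p = 2 ∧ ∀ q ∈ w, q.1 = p.1 → q.2 = p.2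

/-- Signed words (concrete representatives; isomorphism is subsumed by cyclic
equivalence below). -/
def SignedWord : Type := {w : List Letter // IsSignedWord w}

/-- The set of letters occurring in a list of signed letters. -/
def lettersL (w : List Letter) : Finset ℕ := (w.map Prod.fst).toFinset

/-- The set of letters of a signed word. -/
def SignedWord.letters (w : SignedWord) : Finset ℕ := lettersL w.1

/-- The number of (distinct) letters of a signed word. -/
def SignedWord.numLetters (w : SignedWord) : ℕ := w.letters.card

theorem isSignedWord_filter (q : ℕ → Bool) {w : List Letter} (hw : IsSignedWord w) :
    IsSignedWord (w.filter fun p => q p.1) := by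
  intro p hp
  rw [List.mem_filter] at hp
  refine ⟨?_, fun r hr => (hw p hp.1).2 r (List.mem_filter.mp hr).1⟩
  rw [List.count_filter (p := fun r : Letter => q r.1) hp.2]
  exact (hw p hp.1).1

/-- Delete both occurrences of every letter of `T` from `w`. -/
def SignedWord.delete (w : SignedWord) (T : Finset ℕ) : SignedWord :=
  ⟨w.1.filter fun p => decide (p.1 ∉ T), isSignedWord_filter (fun a => decide (a ∉ T)) w.2⟩

/-- The induced signed subword of `w` on a set `U` of letters. -/
def SignedWord.restrict (w : SignedWord) (U : Finset ℕ) : SignedWord :=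
  ⟨w.1.filter fun p => decide (p.1 ∈ U), isSignedWord_filter (fun a => decide (a ∈ U)) w.2⟩

/-- Sign-preserving relabeling of letters. -/
def Iso (w w' : List Letter) : Prop :=
  ∃ f : ℕ ≃ ℕ, w' = w.map fun p => (f p.1, p.2)

/-- The basic move `A^ε x A^ε y ↦ x A^(−ε) y A^(−ε)`. -/
def Move (w w' : List Letter) : Prop :=
  ∃ (a : ℕ) (s : Bool) (x y : List Letter),
    w = (a, s) :: (x ++ (a, s) :: y) ∧ w' = x ++ (a, !s) :: (y ++ [(a, !s)])

/-- Cyclic equivalence of signed words: the equivalence relation generated by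
isomorphism together with the basic move. -/
def CyclicEquivL : List Letter → List Letter → Prop :=
  Relation.EqvGen fun w w' => Iso w w' ∨ Move w w'

/-- Cyclic equivalence of signed words. -/
def SignedWord.CyclicEquiv (w w' : SignedWord) : Prop := CyclicEquivL w.1 w'.1

/-- A cyclic equivalence invariant with values in `F`. -/
def WordInvariant (F : Type*) [Field F] (v : SignedWord → F) : Prop :=
  ∀ w w' : SignedWord, w.CyclicEquiv w' → v w = v w'

/-- The prolongation of `v` to the singular signed word `(w, S)` (the letters of
`S` being declared singular), given by inclusion–exclusion. -/
def prolong (F : Type*) [Field F] (v : SignedWord → F) (w : SignedWord) (S : Finset ℕ) : F :=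
  ∑ T ∈ S.powerset, (-1 : F) ^ T.card * v (w.delete T)

/-- `v` is a finite type invariant of degree ≤ `n`: it is a cyclic equivalence
invariant whose prolongation vanishes on every singular signed word with more
than `n` singular letters. -/
def FiniteTypeLe (F : Type*) [Field F] (n : ℕ) (v : SignedWord → F) : Prop :=
  WordInvariant F v ∧
    ∀ (w : SignedWord) (S : Finset ℕ), S ⊆ w.letters → n < S.card →
      prolong F v w S = 0

/-- The empty signed word `φ`. -/
def wordEmpty : SignedWord := ⟨[], by intro p hp; simp at hp⟩

/-- The one-letter positive signed word `AA`. -/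
def wordAA : SignedWord := ⟨[(0, true), (0, true)], by unfold IsSignedWord; decide⟩

/-- The one-letter negative signed word `ĀĀ`. -/
def wordAAneg : SignedWord := ⟨[(0, false), (0, false)], by unfold IsSignedWord; decide⟩

/-- The two-letter signed word `AABB`. -/
def wordAABB : SignedWord := ⟨[(0, true), (0, true), (1, true), (1, true)], by unfold IsSignedWord; decide⟩

/-- The two-letter signed word `AAB̄B̄`. -/
def wordAABnBn : SignedWord := ⟨[(0, true), (0, true), (1, false), (1, false)], by unfold IsSignedWord; decide⟩

/-- The two-letter signed word `AB̄B̄A`. -/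
def wordABnBnA : SignedWord := ⟨[(0, true), (1, false), (1, false), (0, true)], by unfold IsSignedWord; decide⟩

/-- The two-letter signed word `ABAB`. -/
def wordABAB : SignedWord := ⟨[(0, true), (1, true), (0, true), (1, true)], by unfold IsSignedWord; decide⟩

/-- The underlying list of the word `A₁A₁A₂A₂…AₙAₙ` (all letters positive). -/
def wListN (n : ℕ) : List Letter := (List.range n).flatMap fun i => [(i, true), (i, true)]

/-- `Ncount u w`: the number of `k`-element subsets of the letters of `w`
(`k` = number of letters of `u`) whose induced signed subword is cyclically
equivalent to (an isomorphic copy of) `u`. -/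
noncomputable def Ncount (u w : SignedWord) : ℕ := by
  classical
  exact (w.letters.powerset.filter fun U =>
    U.card = u.numLetters ∧ (w.restrict U).CyclicEquiv u).card

theorem prolong_add (F : Type*) [Field F] (v₁ v₂ : SignedWord → F) (w : SignedWord) (S : Finset ℕ) :
    prolong F (v₁ + v₂) w S = prolong F v₁ w S + prolong F v₂ w S := by
  simp [prolong, ← Finset.sum_add_distrib, mul_add]

theorem prolong_smul (F : Type*) [Field F] (c : F) (v : SignedWord → F) (w : SignedWord) (S : Finset ℕ) :
    prolong F (c • v) w S = c * prolong F v w S := by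
  rw [prolong, prolong, Finset.mul_sum]
  exact Finset.sum_congr rfl fun T _ => by simp [mul_left_comm]

/-- The `F`-vector space `Vₙ` of finite type invariants of degree ≤ `n`. -/
def Vn (F : Type*) [Field F] (n : ℕ) : Submodule F (SignedWord → F) where
  carrier := {v | FiniteTypeLe F n v}
  add_mem' := by
    rintro v₁ v₂ ⟨h1, h1'⟩ ⟨h2, h2'⟩
    refine ⟨fun w w' h => by simp [h1 w w' h, h2 w w' h], fun w S hS hc => ?_⟩
    rw [prolong_add, h1' w S hS hc, h2' w S hS hc, add_zero]
  zero_mem' := ⟨fun _ _ _ => rfl, fun w S hS hc => by simp [prolong]⟩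
  smul_mem' := by
    rintro c v ⟨h, h'⟩
    refine ⟨fun w w' hww => by simp [h w w' hww], fun w S hS hc => ?_⟩
    rw [prolong_smul, h' w S hS hc, mul_zero]

/-- Cyclic equivalence as a setoid on signed words. -/
def cycSetoid : Setoid SignedWord :=
  ⟨SignedWord.CyclicEquiv, fun w => Relation.EqvGen.refl w.1,
    fun h => Relation.EqvGen.symm _ _ h, fun h h' => Relation.EqvGen.trans _ _ _ h h'⟩

open Relation Finset

theorem CyclicEquivL.refl (w : List Letter) : CyclicEquivL w w := EqvGen.refl w

theorem CyclicEquivL.symm {w w' : List Letter} (h : CyclicEquivL w w') : CyclicEquivL w' w :=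
  EqvGen.symm _ _ h

theorem CyclicEquivL.trans {w₁ w₂ w₃ : List Letter} (h₁₂ : CyclicEquivL w₁ w₂)
    (h₂₃ : CyclicEquivL w₂ w₃) : CyclicEquivL w₁ w₃ :=
  EqvGen.trans _ _ _ h₁₂ h₂₃

def restrictL (w : List Letter) (U : Finset ℕ) : List Letter :=
  w.filter fun p => decide (p.1 ∈ U)

theorem mem_lettersL {w : List Letter} {n : ℕ} : n ∈ lettersL w ↔ ∃ p ∈ w, p.1 = n := by
  simp [lettersL]

section Relabel

variable (f : ℕ ≃ ℕ) (w : List Letter)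

theorem lettersL_map_relabel :
    lettersL (w.map fun p => (f p.1, p.2)) = (lettersL w).image f := by
  ext n
  simp [lettersL]

theorem restrictL_map_relabel (U : Finset ℕ) :
    restrictL (w.map fun p => (f p.1, p.2)) (U.image f) =
      (restrictL w U).map fun p => (f p.1, p.2) := by
  simp only [restrictL, List.filter_map]
  congr 1
  exact List.filter_congr fun p _ => by simp [f.injective.eq_iff]

end Relabel

section Move

variable (a : ℕ) (s : Bool) (x y : List Letter)

theorem lettersL_move :
    lettersL (x ++ (a, !s) :: (y ++ [(a, !s)])) = lettersL ((a, s) :: (x ++ (a, s) :: y)) := by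
  ext n
  simp only [lettersL, List.map_cons, List.map_append, List.map_nil, List.mem_toFinset,
    List.mem_cons, List.mem_append, List.not_mem_nil]
  tauto

theorem cyclicEquivL_restrictL_move (U : Finset ℕ) :
    CyclicEquivL (restrictL ((a, s) :: (x ++ (a, s) :: y)) U)
      (restrictL (x ++ (a, !s) :: (y ++ [(a, !s)])) U) := by
  by_cases ha : a ∈ U
  · exact EqvGen.rel _ _ <| Or.inr ⟨a, s, restrictL x U, restrictL y U,
      by simp [restrictL, List.filter_append, ha], by simp [restrictL, List.filter_append, ha]⟩
  · have hsame : restrictL ((a, s) :: (x ++ (a, s) :: y)) U =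
        restrictL (x ++ (a, !s) :: (y ++ [(a, !s)])) U := by
      simp [restrictL, List.filter_append, ha]
    rw [hsame]
    exact CyclicEquivL.refl _

end Move

theorem CyclicEquivL.exists_relabel {w w' : List Letter} (h : CyclicEquivL w w') :
    ∃ f : ℕ ≃ ℕ, lettersL w' = (lettersL w).image f ∧
      ∀ U, CyclicEquivL (restrictL w U) (restrictL w' (U.image f)) := by
  induction h with
  | rel w w' hstep =>
    rcases hstep with ⟨f, rfl⟩ | ⟨a, s, x, y, rfl, rfl⟩
    · refine ⟨f, lettersL_map_relabel f w, fun U => ?_⟩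
      rw [restrictL_map_relabel]
      exact EqvGen.rel _ _ (Or.inl ⟨f, rfl⟩)
    · exact ⟨Equiv.refl ℕ, by simp [lettersL_move], fun U => by
        simpa using cyclicEquivL_restrictL_move a s x y U⟩
  | refl w =>
    exact ⟨Equiv.refl ℕ, by simp, fun U => by simpa using CyclicEquivL.refl (restrictL w U)⟩
  | symm w w' _ ih =>
    obtain ⟨f, hletters, hrestrict⟩ := ih
    refine ⟨f.symm, by simp [hletters, image_image], fun U => CyclicEquivL.symm ?_⟩
    simpa [image_image] using hrestrict (U.image f.symm)
  | trans w₁ w₂ w₃ _ _ ih₁₂ ih₂₃ =>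
    obtain ⟨f, hf, hf'⟩ := ih₁₂
    obtain ⟨g, hg, hg'⟩ := ih₂₃
    refine ⟨f.trans g, by simp [hf, hg, image_image], fun U => ?_⟩
    simpa [image_image] using (hf' U).trans (hg' (U.image f))

namespace SignedWord

theorem restrict_letters (w : SignedWord) : (w.restrict w.letters).1 = w.1 :=
  List.filter_eq_self.mpr fun p hp => decide_eq_true (mem_lettersL.mpr ⟨p, hp, rfl⟩)

theorem letters_delete (w : SignedWord) (T : Finset ℕ) :
    (w.delete T).letters = w.letters \ T := by
  ext n
  simp only [letters, delete, mem_lettersL, mem_sdiff, List.mem_filter, decide_eq_true_eq]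
  constructor
  · rintro ⟨p, ⟨hp, hpT⟩, rfl⟩
    exact ⟨⟨p, hp, rfl⟩, hpT⟩
  · rintro ⟨⟨p, hp, rfl⟩, hnT⟩
    exact ⟨p, ⟨hp, hnT⟩, rfl⟩

theorem delete_restrict_of_disjoint (w : SignedWord) {T U : Finset ℕ} (hUT : Disjoint U T) :
    ((w.delete T).restrict U).1 = (w.restrict U).1 := by
  simp only [restrict, delete, List.filter_filter]
  exact List.filter_congr fun p _ => by
    by_cases hp : p.1 ∈ U <;> simp [hp, disjoint_left.mp hUT]

end SignedWord

section Ncount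

open scoped Classical

noncomputable def copies (u w : SignedWord) : Finset (Finset ℕ) :=
  w.letters.powerset.filter fun U => U.card = u.numLetters ∧ (w.restrict U).CyclicEquiv u

theorem Ncount_eq_card_copies (u w : SignedWord) : Ncount u w = (copies u w).card := by
  unfold Ncount copies
  congr 1

theorem mem_copies {u w : SignedWord} {U : Finset ℕ} :
    U ∈ copies u w ↔
      U ⊆ w.letters ∧ U.card = u.numLetters ∧ (w.restrict U).CyclicEquiv u := by
  simp [copies]

theorem Ncount_le_of_cyclicEquiv (u : SignedWord) {w w' : SignedWord} (h : w.CyclicEquiv w') :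
    Ncount u w ≤ Ncount u w' := by
  obtain ⟨f, hletters, hrestrict⟩ := CyclicEquivL.exists_relabel h
  rw [Ncount_eq_card_copies, Ncount_eq_card_copies]
  refine card_le_card_of_injOn (fun U => U.image f) (fun U hU => ?_)
    (fun U _ V _ hUV => image_injective f.injective hUV)
  obtain ⟨hsub, hcard, hequiv⟩ := mem_copies.mp hU
  refine mem_copies.mpr ⟨?_, by rw [card_image_of_injective _ f.injective, hcard], ?_⟩
  · simpa [SignedWord.letters, hletters] using image_subset_image (f := f) hsub
  · exact (hrestrict U).symm.trans hequiv

theorem Ncount_eq_of_cyclicEquiv (u : SignedWord) {w w' : SignedWord} (h : w.CyclicEquiv w') :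
    Ncount u w = Ncount u w' :=
  (Ncount_le_of_cyclicEquiv u h).antisymm (Ncount_le_of_cyclicEquiv u (CyclicEquivL.symm h))

theorem Ncount_delete (u w : SignedWord) (T : Finset ℕ) :
    Ncount u (w.delete T) = ((copies u w).filter fun U => Disjoint U T).card := by
  rw [Ncount_eq_card_copies]
  congr 1
  ext U
  simp only [mem_filter, mem_copies, SignedWord.letters_delete, subset_sdiff,
    SignedWord.CyclicEquiv]
  constructor
  · rintro ⟨⟨hsub, hUT⟩, hcard, hequiv⟩
    exact ⟨⟨hsub, hcard, w.delete_restrict_of_disjoint hUT ▸ hequiv⟩, hUT⟩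
  · rintro ⟨⟨hsub, hcard, hequiv⟩, hUT⟩
    exact ⟨⟨hsub, hUT⟩, hcard, (w.delete_restrict_of_disjoint hUT).symm ▸ hequiv⟩

theorem sum_powerset_neg_one_pow_card_of_nonempty' {R α : Type*} [Ring R] {s : Finset α}
    (hs : s.Nonempty) : ∑ t ∈ s.powerset, (-1 : R) ^ t.card = 0 := by
  simpa using congrArg (Int.cast : ℤ → R) (sum_powerset_neg_one_pow_card_of_nonempty hs)

theorem prolong_Ncount (F : Type*) [Field F] (u w : SignedWord) {S : Finset ℕ}
    (hS : u.numLetters < S.card) :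
    prolong F (fun w => (Ncount u w : F)) w S = 0 := by
  calc prolong F (fun w => (Ncount u w : F)) w S
      = ∑ U ∈ copies u w, ∑ T ∈ S.powerset with Disjoint U T, (-1 : F) ^ T.card := by
        simp only [prolong, Ncount_delete, card_filter, Nat.cast_sum, mul_sum, sum_filter]
        rw [sum_comm]
        simp
    _ = ∑ U ∈ copies u w, ∑ T ∈ (S \ U).powerset, (-1 : F) ^ T.card := by
        refine sum_congr rfl fun U _ => sum_congr ?_ fun _ _ => rfl
        ext T
        simp [subset_sdiff, disjoint_comm]
    _ = 0 := sum_eq_zero fun U hU => sum_powerset_neg_one_pow_card_of_nonempty' <|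
        sdiff_nonempty.mpr fun hSU => by
          have := card_le_card hSU
          rw [(mem_copies.mp hU).2.1] at this
          omega

theorem finiteTypeLe_Ncount (F : Type*) [Field F] (u : SignedWord) :
    FiniteTypeLe F u.numLetters (fun w => (Ncount u w : F)) :=
  ⟨fun _ _ h => congrArg Nat.cast (Ncount_eq_of_cyclicEquiv u h),
    fun _ _ _ hS => prolong_Ncount F u _ hS⟩

theorem Ncount_self (u : SignedWord) : Ncount u u = 1 := by
  rw [Ncount_eq_card_copies, card_eq_one]
  refine ⟨u.letters, eq_singleton_iff_unique_mem.mpr ⟨?_, fun U hU => ?_⟩⟩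
  · refine mem_copies.mpr ⟨subset_refl _, rfl, ?_⟩
    show CyclicEquivL _ _
    rw [u.restrict_letters]
    exact CyclicEquivL.refl _
  · obtain ⟨hsub, hcard, _⟩ := mem_copies.mp hU
    exact eq_of_subset_of_card_le hsub hcard.ge

theorem exists_copy_of_Ncount_ne_zero {u w : SignedWord} (h : Ncount u w ≠ 0) :
    ∃ U ⊆ w.letters, U.card = u.numLetters ∧ (w.restrict U).CyclicEquiv u := by
  rw [Ncount_eq_card_copies, ← Nat.pos_iff_ne_zero, card_pos] at h
  obtain ⟨U, hU⟩ := h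
  exact ⟨U, mem_copies.mp hU⟩

end Ncount

theorem exists_copy_of_forall_finiteTypeLe (F : Type*) [Field F] {u w : SignedWord}
    (h : ∀ (n : ℕ) (v : SignedWord → F), FiniteTypeLe F n v → v u = v w) :
    ∃ U ⊆ w.letters, U.card = u.numLetters ∧ (w.restrict U).CyclicEquiv u := by
  refine exists_copy_of_Ncount_ne_zero fun h0 => one_ne_zero (α := F) ?_
  simpa [Ncount_self, h0] using h _ _ (finiteTypeLe_Ncount F u)

/-- finite type invariants form a complete invariant for cyclic
equivalence classes of signed words. -/
theorem finiteType_complete (F : Type*) [Field F] (w₁ w₂ : SignedWord)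
    (h : ∀ (n : ℕ) (v : SignedWord → F), FiniteTypeLe F n v → v w₁ = v w₂) :
    w₁.CyclicEquiv w₂ := by
  obtain ⟨U, hU, hUcard, hUequiv⟩ := exists_copy_of_forall_finiteTypeLe F h
  obtain ⟨U', hU', hU'card, -⟩ :=
    exists_copy_of_forall_finiteTypeLe F fun n v hv => (h n v hv).symm
  have hU_eq : U = w₂.letters := eq_of_subset_of_card_le hU <| by
    have := card_le_card hU'
    simp only [SignedWord.numLetters] at hUcard hU'card
    omega
  have : CyclicEquivL w₂.1 w₁.1 := by
    simpa [SignedWord.CyclicEquiv, hU_eq, SignedWord.restrict_letters] using hUequiv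
  exact this.symm
end

section
/- The function on signed words assigning to each signed word its number of letters (as an element of F) is a cyclic equivalence invariant and a finite type invariant of degree ≤ 1, but not of degree ≤ 0. -/
/-
Relabelling and the basic move preserve the set of letters up to a bijection, so the number of
letters is a cyclic invariant. Resolving one singular letter `a` by the skein relation, each pair
`T`, `insert a T` of deleted sets contributes `(-1)^|T| · 1`, since deleting `a` as well
removes exactly one more letter; so the prolongation is `∑_{T ⊆ S \ {a}} (-1)^|T|`, which
vanishes as soon as a second singular letter exists. With a single singular letter it is `1`,
e.g. on `AA`.
-/

lemma card_lettersL_eq_of_iso {w w' : List Letter} (h : Iso w w') :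
    (lettersL w).card = (lettersL w').card := by
  obtain ⟨f, rfl⟩ := h
  have : lettersL (w.map fun p => (f p.1, p.2)) = (lettersL w).image f := by
    ext b
    simp [lettersL]
  rw [this, Finset.card_image_of_injective _ f.injective]

lemma lettersL_eq_of_move {w w' : List Letter} (h : Move w w') : lettersL w = lettersL w' := by
  obtain ⟨a, s, x, y, rfl, rfl⟩ := h
  ext b
  simp only [lettersL, List.map_append, List.map_cons, List.map_nil, List.mem_toFinset,
    List.mem_append, List.mem_cons, List.mem_nil_iff]
  tauto

lemma CyclicEquivL.card_lettersL_eq {w w' : List Letter} (h : CyclicEquivL w w') :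
    (lettersL w).card = (lettersL w').card := by
  induction h with
  | rel _ _ h => exact h.elim card_lettersL_eq_of_iso fun h => congrArg _ (lettersL_eq_of_move h)
  | refl => rfl
  | symm _ _ _ ih => exact ih.symm
  | trans _ _ _ _ _ ih₁ ih₂ => exact ih₁.trans ih₂

lemma wordInvariant_numLetters (F : Type*) [Field F] :
    WordInvariant F (fun w => (w.numLetters : F)) :=
  fun _ _ h => congrArg Nat.cast h.card_lettersL_eq

lemma SignedWord.letters_delete_s6 (w : SignedWord) (T : Finset ℕ) :
    (w.delete T).letters = w.letters \ T := by
  ext b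
  simp [SignedWord.delete, SignedWord.letters, lettersL]

lemma SignedWord.numLetters_delete_add_card {w : SignedWord} {T : Finset ℕ}
    (hT : T ⊆ w.letters) : (w.delete T).numLetters + T.card = w.numLetters := by
  rw [SignedWord.numLetters, SignedWord.letters_delete_s6, Finset.card_sdiff_add_card_eq_card hT,
    SignedWord.numLetters]

lemma SignedWord.numLetters_delete_eq_numLetters_delete_insert_add_one {w : SignedWord}
    {a : ℕ} {T : Finset ℕ} (haT : a ∉ T) (hT : insert a T ⊆ w.letters) :
    (w.delete T).numLetters = (w.delete (insert a T)).numLetters + 1 := by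
  have h := numLetters_delete_add_card ((Finset.subset_insert a T).trans hT)
  have h' := numLetters_delete_add_card hT
  rw [Finset.card_insert_of_notMem haT] at h'
  omega

/-- The skein relation, resolving the singular letter `a`. -/
lemma prolong_insert (F : Type*) [Field F] (v : SignedWord → F) (w : SignedWord) {a : ℕ}
    {S : Finset ℕ} (ha : a ∉ S) :
    prolong F v w (insert a S) =
      ∑ T ∈ S.powerset, (-1 : F) ^ T.card * (v (w.delete T) - v (w.delete (insert a T))) := by
  rw [prolong, Finset.sum_powerset_insert ha, ← Finset.sum_add_distrib]
  refine Finset.sum_congr rfl fun T hT => ?_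
  have haT : a ∉ T := fun h => ha (Finset.mem_powerset.mp hT h)
  rw [Finset.card_insert_of_notMem haT, pow_succ]
  ring

lemma prolong_numLetters_eq_zero (F : Type*) [Field F] {w : SignedWord} {S : Finset ℕ}
    (hS : S ⊆ w.letters) (hcard : 1 < S.card) :
    prolong F (fun w => (w.numLetters : F)) w S = 0 := by
  obtain ⟨a, haS⟩ := Finset.card_pos.mp (zero_lt_one.trans hcard)
  have hS' : (S.erase a).Nonempty :=
    Finset.card_pos.mp (by rw [Finset.card_erase_of_mem haS]; omega)
  rw [← Finset.insert_erase haS, prolong_insert F _ w (Finset.notMem_erase a S)]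
  have hdrop : ∀ T ∈ (S.erase a).powerset,
      ((w.delete T).numLetters : F) - (w.delete (insert a T)).numLetters = 1 := by
    intro T hT
    have hTS : T ⊆ S.erase a := Finset.mem_powerset.mp hT
    have haT : a ∉ T := fun h => Finset.notMem_erase a S (hTS h)
    have hT : insert a T ⊆ w.letters :=
      (Finset.insert_subset haS (hTS.trans (Finset.erase_subset a S))).trans hS
    rw [SignedWord.numLetters_delete_eq_numLetters_delete_insert_add_one haT hT, Nat.cast_succ,
      add_sub_cancel_left]
  rw [Finset.sum_congr rfl fun T hT => by rw [hdrop T hT, mul_one]]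
  exact_mod_cast
    congrArg (Int.cast : ℤ → F) (Finset.sum_powerset_neg_one_pow_card_of_nonempty hS')

lemma prolong_singleton (F : Type*) [Field F] (v : SignedWord → F) (w : SignedWord) (a : ℕ) :
    prolong F v w {a} = v (w.delete ∅) - v (w.delete {a}) := by
  simpa using prolong_insert F v w (Finset.notMem_empty a)

lemma not_finiteTypeLe_zero_numLetters (F : Type*) [Field F] :
    ¬ FiniteTypeLe F 0 (fun w => (w.numLetters : F)) := by
  rintro ⟨-, hvanish⟩
  have h := hvanish wordAA {0} (by decide) (by decide)
  rw [prolong_singleton, show (wordAA.delete ∅).numLetters = 1 by decide,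
    show (wordAA.delete {0}).numLetters = 0 by decide] at h
  simp at h

theorem numLetters_finiteType_general (F : Type*) [Field F] :
    WordInvariant F (fun w => (w.numLetters : F)) ∧
    FiniteTypeLe F 1 (fun w => (w.numLetters : F)) ∧
    ¬ FiniteTypeLe F 0 (fun w => (w.numLetters : F)) :=
  ⟨wordInvariant_numLetters F,
    ⟨wordInvariant_numLetters F, fun _ _ hS hcard => prolong_numLetters_eq_zero F hS hcard⟩,
    not_finiteTypeLe_zero_numLetters F⟩

/-- the number-of-letters function is a cyclic equivalence
invariant and a finite type invariant of degree ≤ 1, but not of degree ≤ 0. -/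
theorem numLetters_finiteType (F : Type*) [Field F] [CharZero F] :
    WordInvariant F (fun w => (w.numLetters : F)) ∧
    FiniteTypeLe F 1 (fun w => (w.numLetters : F)) ∧
    ¬ FiniteTypeLe F 0 (fun w => (w.numLetters : F)) :=
  numLetters_finiteType_general F
end
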